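/- arXiv:1802.02547 — 7 statements merged into one kernel-verified Lean document; each statement's English description precedes it below -/
import Mathlib

section
/- Let P₁,…,P_k ∈ {0,1}^{r×n} be a patch structure, α ∈ [0,1], and f_w(x) = (1/k)·Σ_{i=1}^k σ_α(wᵀPᵢx). Let μ be a probability measure on ℝⁿ symmetric about the origin with finite second moments, Σ = E_{x∼μ}[xxᵀ], and define the loss L(w) = E_{x∼μ}[(f_{w*}(x) − f_w(x))²]. Then for every w, w* ∈ ℝ^r, L(w) ≤ ((1+α)·λ_max(Σ)/2)·‖w* − w‖², where λ_max(Σ) is the maximum eigenvalue of the symmetric positive semidefinite matrix Σ. -/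
open MeasureTheory Matrix Finset
open scoped RealInnerProductSpace

noncomputable section

/-- Leaky ReLU activation with parameter `α`. -/
def lrelu (α z : ℝ) : ℝ := if 0 ≤ z then z else α * z

/-- A patch structure: each `P i` is a 0/1 matrix with exactly one 1 in each row
and at most one 1 in each column. -/
def IsPatchStruct {r n k : ℕ} (P : Fin k → Matrix (Fin r) (Fin n) ℝ) : Prop :=
  (∀ i a b, P i a b = 0 ∨ P i a b = 1) ∧
  (∀ i a, ∃! b, P i a b = 1) ∧
  (∀ i b a a', P i a b = 1 → P i a' b = 1 → a = a')

/-- View a plain vector as an element of Euclidean space. -/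
def toEuc {m : ℕ} (v : Fin m → ℝ) : EuclideanSpace ℝ (Fin m) := WithLp.toLp 2 v

/-- The one-hidden-layer convolutional network
`f_w(x) = (1/k) ∑ i, σ_α (wᵀ Pᵢ x)` with average pooling. -/
def convnet {r n k : ℕ} (α : ℝ) (P : Fin k → Matrix (Fin r) (Fin n) ℝ)
    (w : EuclideanSpace ℝ (Fin r)) (x : EuclideanSpace ℝ (Fin n)) : ℝ :=
  (1 / (k : ℝ)) * ∑ i, lrelu α ((w : Fin r → ℝ) ⬝ᵥ (P i).mulVec x)

/-- The (uncentered) covariance matrix `Σ = E_{x∼μ}[x xᵀ]`. -/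
def covMat {n : ℕ} (μ : Measure (EuclideanSpace ℝ (Fin n))) : Matrix (Fin n) (Fin n) ℝ :=
  Matrix.of fun i j => ∫ x, x i * x j ∂μ

/-- Maximum eigenvalue of a Hermitian (real symmetric) matrix. -/
def lamMax {m : ℕ} (A : Matrix (Fin m) (Fin m) ℝ) (hA : A.IsHermitian) : ℝ :=
  ⨆ i, hA.eigenvalues i

/-- Minimum eigenvalue of a Hermitian (real symmetric) matrix. -/
def lamMin {m : ℕ} (A : Matrix (Fin m) (Fin m) ℝ) (hA : A.IsHermitian) : ℝ :=
  ⨅ i, hA.eigenvalues i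

/-!
Since `σ_α(z) = (1+α)/2 · z + (1-α)/2 · |z|`, the difference `f_{w*} - f_w` is `c₁ s + c₂ t` with
`c₁ = (1+α)/2`, `c₂ = (1-α)/2`, `s` the average of the odd functions `(w* - w)ᵀ Pᵢ x` and `t` the
average of the even functions `|w*ᵀ Pᵢ x| - |wᵀ Pᵢ x|`. Against a symmetric measure the cross term
`2 c₁ c₂ s t` integrates to zero, while `s²` and `t²` are both at most the average `Q` of the
`((w* - w)ᵀ Pᵢ x)²`; hence `L(w) ≤ (c₁² + c₂²) E[Q] ≤ c₁ E[Q]`. Finally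
`E[(uᵀ x)²] = uᵀ Σ u ≤ λ_max(Σ) ‖u‖²`, and `u = Pᵢᵀ (w* - w)` has norm `‖w* - w‖` because
`Pᵢ Pᵢᵀ = 1`.
-/

lemma lrelu_sub_lrelu (α b c : ℝ) :
    lrelu α b - lrelu α c = (1 + α) / 2 * (b - c) + (1 - α) / 2 * (|b| - |c|) := by
  have hlrelu : ∀ z, lrelu α z = (1 + α) / 2 * z + (1 - α) / 2 * |z| := fun z => by
    unfold lrelu
    split_ifs with hz
    · rw [abs_of_nonneg hz]; ring
    · rw [abs_of_neg (not_le.mp hz)]; ring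
  rw [hlrelu, hlrelu]; ring

lemma convnet_sub_convnet {r n k : ℕ} (α : ℝ) (P : Fin k → Matrix (Fin r) (Fin n) ℝ)
    (w' w : EuclideanSpace ℝ (Fin r)) (x : EuclideanSpace ℝ (Fin n)) :
    convnet α P w' x - convnet α P w x =
      (1 + α) / 2 * (1 / (k : ℝ) *
          ∑ i, ((w' : Fin r → ℝ) ⬝ᵥ P i *ᵥ x - (w : Fin r → ℝ) ⬝ᵥ P i *ᵥ x)) +
        (1 - α) / 2 * (1 / (k : ℝ) *
          ∑ i, (|(w' : Fin r → ℝ) ⬝ᵥ P i *ᵥ x| - |(w : Fin r → ℝ) ⬝ᵥ P i *ᵥ x|)) := by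
  simp only [convnet, ← mul_sub, ← sum_sub_distrib, lrelu_sub_lrelu, sum_add_distrib, ← mul_sum]
  ring

lemma mean_sq_le_of_sq_le {k : ℕ} {f g : Fin k → ℝ} (h : ∀ i, f i ^ 2 ≤ g i) :
    (1 / (k : ℝ) * ∑ i, f i) ^ 2 ≤ 1 / (k : ℝ) * ∑ i, g i := by
  have hmean := sum_div_card_sq_le_sum_sq_div_card (s := univ) (f := f)
  simp only [card_univ, Fintype.card_fin] at hmean
  rw [one_div_mul_eq_div, one_div_mul_eq_div]
  exact hmean.trans (div_le_div_of_nonneg_right (sum_le_sum fun i _ => h i) k.cast_nonneg)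

open MatrixOrder in
lemma dotProduct_mulVec_le_lamMax {m : ℕ} (A : Matrix (Fin m) (Fin m) ℝ) (hA : A.IsHermitian)
    (u : Fin m → ℝ) : u ⬝ᵥ A *ᵥ u ≤ lamMax A hA * (u ⬝ᵥ u) := by
  have hle : A ≤ algebraMap ℝ _ (lamMax A hA) := by
    refine le_algebraMap_of_spectrum_le (fun x hx => ?_) hA.isSelfAdjoint
    rw [hA.spectrum_real_eq_range_eigenvalues] at hx
    obtain ⟨i, rfl⟩ := hx
    exact le_ciSup (Finite.bddAbove_range _) i
  simpa [sub_mulVec, dotProduct_sub, Algebra.algebraMap_eq_smul_one, smul_mulVec,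
    dotProduct_smul] using (le_iff.mp hle).dotProduct_mulVec_nonneg u

namespace IsPatchStruct

variable {r n k : ℕ} {P : Fin k → Matrix (Fin r) (Fin n) ℝ}

lemma mul_transpose_eq_one (hP : IsPatchStruct P) (i : Fin k) : P i * (P i)ᵀ = 1 := by
  obtain ⟨h01, hrow, hcol⟩ := hP
  ext a a'
  obtain ⟨b, hb, hb_unique⟩ := hrow i a
  rw [mul_apply, sum_eq_single b]
  · rcases h01 i a' b with h | h
    · have : a ≠ a' := by rintro rfl; simp [hb] at h
      simp [h, one_apply_ne this]
    · obtain rfl := hcol i b a a' hb h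
      simp [h]
  · intro b' _ hb'
    rcases h01 i a b' with h | h
    · simp [h]
    · exact absurd (hb_unique b' h) hb'
  · simp

lemma dotProduct_self_vecMul (hP : IsPatchStruct P) (i : Fin k) (v : Fin r → ℝ) :
    (v ᵥ* P i) ⬝ᵥ (v ᵥ* P i) = v ⬝ᵥ v := by
  rw [dotProduct_comm, ← dotProduct_mulVec, ← mulVec_transpose, mulVec_mulVec,
    hP.mul_transpose_eq_one, one_mulVec]

end IsPatchStruct

lemma integral_sq_add_le_of_odd_of_even {G : Type*} [MeasurableSpace G] [AddGroup G]
    [MeasurableNeg G] {μ : Measure G} [μ.IsNegInvariant] {s t Q : G → ℝ} (c d : ℝ)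
    (hs : ∀ x, s (-x) = -s x) (ht : ∀ x, t (-x) = t x)
    (hsQ : ∀ x, s x ^ 2 ≤ Q x) (htQ : ∀ x, t x ^ 2 ≤ Q x) (hQ : Integrable Q μ)
    (hmeas : AEStronglyMeasurable (fun x => c * s x + d * t x) μ) :
    ∫ x, (c * s x + d * t x) ^ 2 ∂μ ≤ (c ^ 2 + d ^ 2) * ∫ x, Q x ∂μ := by
  set g := fun x => c * s x + d * t x
  -- the cross terms `2 c d s t` at `x` and `-x` cancel
  have hpair : ∀ x, g x ^ 2 + g (-x) ^ 2 ≤ 2 * (c ^ 2 + d ^ 2) * Q x := fun x => by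
    simp only [g, hs, ht]
    nlinarith [mul_le_mul_of_nonneg_left (hsQ x) (sq_nonneg c),
      mul_le_mul_of_nonneg_left (htQ x) (sq_nonneg d)]
  have hg : Integrable (fun x => g x ^ 2) μ :=
    (hQ.const_mul (2 * (c ^ 2 + d ^ 2))).mono' (hmeas.pow 2) (ae_of_all _ fun x => by
      rw [Real.norm_eq_abs, abs_of_nonneg (sq_nonneg _)]
      nlinarith [hpair x, sq_nonneg (g (-x))])
  have hneg : ∫ x, (g x ^ 2 + g (-x) ^ 2) ∂μ = 2 * ∫ x, g x ^ 2 ∂μ := by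
    rw [integral_add hg hg.comp_neg, integral_neg_eq_self (fun x => g x ^ 2)]
    ring
  have hmono : ∫ x, (g x ^ 2 + g (-x) ^ 2) ∂μ ≤ ∫ x, 2 * (c ^ 2 + d ^ 2) * Q x ∂μ :=
    integral_mono (hg.add hg.comp_neg) (hQ.const_mul _) hpair
  rw [hneg, integral_const_mul] at hmono
  linarith

section SecondMoments

variable {n : ℕ} {μ : Measure (EuclideanSpace ℝ (Fin n))}

lemma dotProduct_sq_eq_sum_sum (u y : Fin n → ℝ) :
    (u ⬝ᵥ y) ^ 2 = ∑ i, ∑ j, u i * u j * (y i * y j) := by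
  rw [dotProduct, sq, sum_mul_sum]
  exact sum_congr rfl fun i _ => sum_congr rfl fun j _ => by ring

lemma integrable_apply_mul_apply (hmom : Integrable (fun x => ‖x‖ ^ 2) μ) (i j : Fin n) :
    Integrable (fun x : EuclideanSpace ℝ (Fin n) => x i * x j) μ :=
  hmom.mono' (by fun_prop : Continuous _).aestronglyMeasurable (ae_of_all _ fun x => by
    rw [norm_mul, sq]
    exact mul_le_mul (PiLp.norm_apply_le x i) (PiLp.norm_apply_le x j) (norm_nonneg _)
      (norm_nonneg _))

lemma integrable_dotProduct_mulVec_sq {m : ℕ} (hmom : Integrable (fun x => ‖x‖ ^ 2) μ)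
    (v : Fin m → ℝ) (A : Matrix (Fin m) (Fin n) ℝ) :
    Integrable (fun x : EuclideanSpace ℝ (Fin n) => (v ⬝ᵥ A *ᵥ x) ^ 2) μ := by
  simp only [dotProduct_mulVec, dotProduct_sq_eq_sum_sum]
  exact integrable_finsetSum _ fun i _ => integrable_finsetSum _ fun j _ =>
    (integrable_apply_mul_apply hmom i j).const_mul _

lemma dotProduct_covMat_mulVec (hmom : Integrable (fun x => ‖x‖ ^ 2) μ) (u : Fin n → ℝ) :
    u ⬝ᵥ covMat μ *ᵥ u = ∫ x, (u ⬝ᵥ x) ^ 2 ∂μ := by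
  simp only [dotProduct_sq_eq_sum_sum]
  rw [integral_finsetSum _ fun i _ => integrable_finsetSum _ fun j _ =>
    (integrable_apply_mul_apply hmom i j).const_mul _]
  simp only [integral_finsetSum _ fun j _ => (integrable_apply_mul_apply hmom _ j).const_mul _,
    integral_const_mul, dotProduct, mulVec, covMat, of_apply, mul_sum]
  exact sum_congr rfl fun i _ => sum_congr rfl fun j _ => by ring

lemma IsPatchStruct.integral_dotProduct_mulVec_sq_le {r k : ℕ}
    {P : Fin k → Matrix (Fin r) (Fin n) ℝ} (hP : IsPatchStruct P)
    (hmom : Integrable (fun x => ‖x‖ ^ 2) μ) (hSig : (covMat μ).IsHermitian)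
    (v : EuclideanSpace ℝ (Fin r)) (i : Fin k) :
    ∫ x, ((v : Fin r → ℝ) ⬝ᵥ P i *ᵥ x) ^ 2 ∂μ ≤ lamMax (covMat μ) hSig * ‖v‖ ^ 2 := by
  simp only [dotProduct_mulVec]
  rw [← dotProduct_covMat_mulVec hmom, ← real_inner_self_eq_norm_sq,
    EuclideanSpace.inner_eq_star_dotProduct, star_trivial, ← hP.dotProduct_self_vecMul i]
  exact dotProduct_mulVec_le_lamMax _ hSig _

lemma IsPatchStruct.integral_mean_dotProduct_mulVec_sq_le {r k : ℕ} (hk : 0 < k)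
    {P : Fin k → Matrix (Fin r) (Fin n) ℝ} (hP : IsPatchStruct P)
    (hmom : Integrable (fun x => ‖x‖ ^ 2) μ) (hSig : (covMat μ).IsHermitian)
    (v : EuclideanSpace ℝ (Fin r)) :
    ∫ x, 1 / (k : ℝ) * ∑ i, ((v : Fin r → ℝ) ⬝ᵥ P i *ᵥ x) ^ 2 ∂μ
      ≤ lamMax (covMat μ) hSig * ‖v‖ ^ 2 := by
  rw [integral_const_mul,
    integral_finsetSum _ fun i _ => integrable_dotProduct_mulVec_sq hmom _ _]
  calc 1 / (k : ℝ) * ∑ i, ∫ x, ((v : Fin r → ℝ) ⬝ᵥ P i *ᵥ x) ^ 2 ∂μ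
      ≤ 1 / (k : ℝ) * ∑ _i : Fin k, lamMax (covMat μ) hSig * ‖v‖ ^ 2 := by
        gcongr with i
        exact hP.integral_dotProduct_mulVec_sq_le hmom hSig v i
    _ = lamMax (covMat μ) hSig * ‖v‖ ^ 2 := by
        rw [sum_const, card_univ, Fintype.card_fin, nsmul_eq_mul]
        field_simp

end SecondMoments

lemma integral_sq_convnet_sub_convnet_le {r n k : ℕ} {μ : Measure (EuclideanSpace ℝ (Fin n))}
    [μ.IsNegInvariant] (hmom : Integrable (fun x => ‖x‖ ^ 2) μ) (α : ℝ)
    (P : Fin k → Matrix (Fin r) (Fin n) ℝ) (w' w : EuclideanSpace ℝ (Fin r)) :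
    ∫ x, (convnet α P w' x - convnet α P w x) ^ 2 ∂μ
      ≤ (((1 + α) / 2) ^ 2 + ((1 - α) / 2) ^ 2) *
        ∫ x, 1 / (k : ℝ) *
          ∑ i, (((w' - w : EuclideanSpace ℝ (Fin r)) : Fin r → ℝ) ⬝ᵥ P i *ᵥ x) ^ 2 ∂μ := by
  have hsub : ∀ i (x : EuclideanSpace ℝ (Fin n)),
      (w' : Fin r → ℝ) ⬝ᵥ P i *ᵥ x - (w : Fin r → ℝ) ⬝ᵥ P i *ᵥ x
        = ((w' - w : EuclideanSpace ℝ (Fin r)) : Fin r → ℝ) ⬝ᵥ P i *ᵥ x := fun i x => by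
    simp [sub_dotProduct]
  simp_rw [convnet_sub_convnet]
  refine integral_sq_add_le_of_odd_of_even _ _ (fun x => ?_) (fun x => ?_)
    (fun x => mean_sq_le_of_sq_le fun i => by rw [hsub])
    (fun x => mean_sq_le_of_sq_le fun i => by
      rw [← hsub]
      exact sq_le_sq.mpr (abs_abs_sub_abs_le_abs_sub _ _))
    ((integrable_finsetSum _ fun i _ => integrable_dotProduct_mulVec_sq hmom _ _).const_mul _)
    (Continuous.aestronglyMeasurable (by fun_prop))
  · simp [mulVec_neg, sum_add_distrib]
    ring
  · simp [mulVec_neg]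

theorem stmt1_general {n r k : ℕ} (hk : 0 < k) (P : Fin k → Matrix (Fin r) (Fin n) ℝ)
    (hP : IsPatchStruct P) (α : ℝ) (hα : α ∈ Set.Icc (0 : ℝ) 1)
    (μ : Measure (EuclideanSpace ℝ (Fin n)))
    (hsymm : μ.map (fun x => -x) = μ)
    (hmom : Integrable (fun x => ‖x‖ ^ 2) μ)
    (hSig : (covMat μ).IsHermitian)
    (w wstar : EuclideanSpace ℝ (Fin r)) :
    ∫ x, (convnet α P wstar x - convnet α P w x) ^ 2 ∂μ
      ≤ (1 + α) * lamMax (covMat μ) hSig / 2 * ‖wstar - w‖ ^ 2 := by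
  obtain ⟨hα0, hα1⟩ := hα
  have : μ.IsNegInvariant := ⟨hsymm⟩
  have hQ_le := hP.integral_mean_dotProduct_mulVec_sq_le hk hmom hSig (wstar - w)
  set M := lamMax (covMat μ) hSig * ‖wstar - w‖ ^ 2
  have hM : 0 ≤ M := (integral_nonneg fun x => by positivity).trans hQ_le
  calc _ ≤ (((1 + α) / 2) ^ 2 + ((1 - α) / 2) ^ 2) * _ :=
        integral_sq_convnet_sub_convnet_le hmom α P wstar w
    _ ≤ (((1 + α) / 2) ^ 2 + ((1 - α) / 2) ^ 2) * M := by gcongr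
    _ ≤ (1 + α) / 2 * M := mul_le_mul_of_nonneg_right (by nlinarith) hM
    _ = (1 + α) * lamMax (covMat μ) hSig / 2 * ‖wstar - w‖ ^ 2 := by ring

/-- For a patch structure `P₁,…,P_k`, `α ∈ [0,1]`, and a symmetric
probability measure `μ` with finite second moments and covariance `Σ`, the loss
`L(w) = E[(f_{w*}(x) − f_w(x))²]` satisfies `L(w) ≤ ((1+α)·λ_max(Σ)/2)·‖w* − w‖²`. -/
theorem stmt1 {n r k : ℕ} (hk : 0 < k) (P : Fin k → Matrix (Fin r) (Fin n) ℝ)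
    (hP : IsPatchStruct P) (α : ℝ) (hα : α ∈ Set.Icc (0 : ℝ) 1)
    (μ : Measure (EuclideanSpace ℝ (Fin n))) [IsProbabilityMeasure μ]
    (hsymm : μ.map (fun x => -x) = μ)
    (hmom : Integrable (fun x => ‖x‖ ^ 2) μ)
    (hSig : (covMat μ).IsHermitian)
    (w wstar : EuclideanSpace ℝ (Fin r)) :
    ∫ x, (convnet α P wstar x - convnet α P w x) ^ 2 ∂μ
      ≤ (1 + α) * lamMax (covMat μ) hSig / 2 * ‖wstar - w‖ ^ 2 :=
  stmt1_general hk P hP α hα μ hsymm hmom hSig w wstar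
end
end

section
/- Let P₁,…,P_k ∈ {0,1}^{r×n} be a patch structure, α ∈ [0,1], and f_w(x) = (1/k)·Σ_{i=1}^k σ_α(wᵀPᵢx). Let μ be a probability measure on ℝⁿ symmetric about the origin with finite second moments, Σ = E_{x∼μ}[xxᵀ], and P_Σ = Σ_{i,j=1}^k PᵢΣPⱼᵀ. Then for all w, w* ∈ ℝ^r, E_{x∼μ}[(f_{w*}(x) − f_w(x))·((w* − w)ᵀ(Σ_{i=1}^k Pᵢ)x)] = ((1+α)/(2k))·(w* − w)ᵀ P_Σ (w* − w). -/
open MeasureTheory Matrix Finset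
open scoped RealInnerProductSpace

noncomputable section

/- The leaky ReLU satisfies σ_α(z) − σ_α(−z) = (1 + α) z, so the odd part of the network is linear:
f_w(x) − f_w(−x) = ((1 + α)/k) wᵀ(∑ᵢ Pᵢ)x. Hence the integrand g satisfies
g(x) + g(−x) = ((1 + α)/k) ((w* − w)ᵀ(∑ᵢ Pᵢ)x)², and since μ is symmetric, E g is half the
expectation of this square, which is the quadratic form of Σ at (∑ᵢ Pᵢ)ᵀ(w* − w). -/

open Asymptotics

theorem lrelu_sub_lrelu_neg (α z : ℝ) : lrelu α z - lrelu α (-z) = (1 + α) * z := by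
  unfold lrelu
  split_ifs with hz hz' hz'
  · obtain rfl : z = 0 := by linarith
    ring
  all_goals linarith

theorem abs_lrelu_le (α z : ℝ) : |lrelu α z| ≤ (1 + |α|) * |z| := by
  unfold lrelu
  split_ifs
  · nlinarith [abs_nonneg α, abs_nonneg z]
  · rw [abs_mul]; nlinarith [abs_nonneg α, abs_nonneg z]

@[fun_prop]
theorem continuous_lrelu (α : ℝ) : Continuous (lrelu α) :=
  continuous_if_le continuous_const continuous_id continuous_id.continuousOn
    (continuous_const.mul continuous_id).continuousOn fun z hz => by simp [← hz]

section EuclideanSpace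

variable {n : ℕ}

theorem isBigO_euclidean_apply (i : Fin n) :
    (fun x : EuclideanSpace ℝ (Fin n) => x i) =O[⊤] fun x => ‖x‖ :=
  isBigO_top.2 ⟨1, fun x => by simpa using PiLp.norm_apply_le x i⟩

theorem isBigO_dotProduct (u : Fin n → ℝ) :
    (fun x : EuclideanSpace ℝ (Fin n) => u ⬝ᵥ x) =O[⊤] fun x => ‖x‖ :=
  IsBigO.fun_sum fun i _ => (isBigO_euclidean_apply i).const_mul_left _

theorem integrable_mul_of_isBigO_norm {E : Type*} [NormedAddCommGroup E] [MeasurableSpace E]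
    {μ : Measure E} (hmom : Integrable (fun x => ‖x‖ ^ 2) μ) {f g : E → ℝ}
    (hfm : AEStronglyMeasurable f μ) (hgm : AEStronglyMeasurable g μ)
    (hf : f =O[⊤] fun x => ‖x‖) (hg : g =O[⊤] fun x => ‖x‖) :
    Integrable (fun x => f x * g x) μ :=
  (hf.mul hg).integrable (hfm.mul hgm) (by simpa only [sq] using hmom)

theorem integral_dotProduct_sq {μ : Measure (EuclideanSpace ℝ (Fin n))}
    (hmom : Integrable (fun x => ‖x‖ ^ 2) μ) (u : Fin n → ℝ) :
    ∫ x, (u ⬝ᵥ x) ^ 2 ∂μ = u ⬝ᵥ covMat μ *ᵥ u := by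
  have hcoord : ∀ p q : Fin n, Integrable (fun x : EuclideanSpace ℝ (Fin n) => x p * x q) μ :=
    fun p q => integrable_mul_of_isBigO_norm hmom (by fun_prop) (by fun_prop)
      (isBigO_euclidean_apply p) (isBigO_euclidean_apply q)
  calc ∫ x, (u ⬝ᵥ x) ^ 2 ∂μ = ∫ x, ∑ p, ∑ q, u p * u q * (x p * x q) ∂μ := by
        congr 1 with x
        simp only [dotProduct, sq, sum_mul_sum]
        exact sum_congr rfl fun p _ => sum_congr rfl fun q _ => by ring
    _ = ∑ p, ∑ q, u p * u q * ∫ x, x p * x q ∂μ := by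
        rw [integral_finsetSum _ fun p _ =>
          integrable_finsetSum _ fun q _ => (hcoord p q).const_mul _]
        refine sum_congr rfl fun p _ => ?_
        rw [integral_finsetSum _ fun q _ => (hcoord p q).const_mul _]
        simp only [integral_const_mul]
    _ = u ⬝ᵥ covMat μ *ᵥ u := by
        simp only [dotProduct, mulVec, covMat, of_apply, mul_sum]
        exact sum_congr rfl fun p _ => sum_congr rfl fun q _ => by ring

end EuclideanSpace

theorem integral_eq_half_integral_add_comp_neg {G : Type*} [MeasurableSpace G] [AddGroup G]
    [MeasurableNeg G] {μ : Measure G} [μ.IsNegInvariant] {f : G → ℝ} (hf : Integrable f μ) :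
    ∫ x, f x ∂μ = (∫ x, (f x + f (-x)) ∂μ) / 2 := by
  rw [integral_add hf hf.comp_neg, integral_neg_eq_self]
  ring

theorem sum_sum_mul_mul_transpose {ι m n R : Type*} [Fintype n] [Semiring R]
    (s : Finset ι) (P : ι → Matrix m n R) (S : Matrix n n R) :
    ∑ i ∈ s, ∑ j ∈ s, P i * S * (P j)ᵀ = (∑ i ∈ s, P i) * S * (∑ i ∈ s, P i)ᵀ := by
  simp only [transpose_sum, Matrix.sum_mul, Matrix.mul_sum]
  exact sum_comm

theorem dotProduct_mul_mul_transpose_mulVec {m n R : Type*} [Fintype m] [Fintype n]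
    [CommSemiring R] (d : m → R) (A : Matrix m n R) (S : Matrix n n R) :
    d ⬝ᵥ (A * S * Aᵀ) *ᵥ d = (d ᵥ* A) ⬝ᵥ S *ᵥ (d ᵥ* A) := by
  rw [← mulVec_mulVec, ← mulVec_mulVec, dotProduct_mulVec, mulVec_transpose]

section ConvNet

variable {r n k : ℕ} (α : ℝ) (P : Fin k → Matrix (Fin r) (Fin n) ℝ) (w : EuclideanSpace ℝ (Fin r))

theorem continuous_convnet : Continuous (convnet α P w) := by
  unfold convnet
  fun_prop

theorem isBigO_convnet : convnet α P w =O[⊤] fun x => ‖x‖ := by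
  refine (IsBigO.fun_sum fun i _ => ?_).const_mul_left _
  refine IsBigO.trans ?_ (isBigO_dotProduct ((w : Fin r → ℝ) ᵥ* P i))
  refine isBigO_top.2 ⟨1 + |α|, fun x => ?_⟩
  simpa only [Real.norm_eq_abs, dotProduct_mulVec] using abs_lrelu_le α _

theorem convnet_sub_convnet_neg (x : EuclideanSpace ℝ (Fin n)) :
    convnet α P w x - convnet α P w (-x) = (1 + α) / k * ((w : Fin r → ℝ) ⬝ᵥ (∑ i, P i) *ᵥ x) := by
  simp only [convnet, ← mul_sub, ← sum_sub_distrib, WithLp.ofLp_neg, mulVec_neg, dotProduct_neg,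
    lrelu_sub_lrelu_neg, ← mul_sum, sum_mulVec, dotProduct_sum]
  ring

end ConvNet

theorem stmt4_general {n r k : ℕ} (P : Fin k → Matrix (Fin r) (Fin n) ℝ) (α : ℝ)
    (μ : Measure (EuclideanSpace ℝ (Fin n)))
    (hsymm : μ.map (fun x => -x) = μ)
    (hmom : Integrable (fun x => ‖x‖ ^ 2) μ)
    (w wstar : EuclideanSpace ℝ (Fin r)) :
    ∫ x, (convnet α P wstar x - convnet α P w x)
        * ((fun j => wstar j - w j) ⬝ᵥ (∑ i, P i).mulVec x) ∂μ
      = (1 + α) / (2 * k)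
          * ((fun j => wstar j - w j) ⬝ᵥ
              (∑ i, ∑ j, P i * covMat μ * (P j)ᵀ).mulVec (fun j => wstar j - w j)) := by
  have : μ.IsNegInvariant := ⟨hsymm⟩
  set d : Fin r → ℝ := fun j => wstar j - w j
  set A := ∑ i, P i
  have hd : d = (wstar : Fin r → ℝ) - w := rfl
  have hint : Integrable (fun x => (convnet α P wstar x - convnet α P w x) * (d ⬝ᵥ A *ᵥ x)) μ :=
    integrable_mul_of_isBigO_norm hmom
      ((continuous_convnet α P wstar).sub (continuous_convnet α P w)).aestronglyMeasurable
      (by fun_prop) ((isBigO_convnet α P wstar).sub (isBigO_convnet α P w))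
      (by simpa only [dotProduct_mulVec] using isBigO_dotProduct (d ᵥ* A))
  have hsymmetrized : ∀ x : EuclideanSpace ℝ (Fin n),
      (convnet α P wstar x - convnet α P w x) * (d ⬝ᵥ A *ᵥ x)
        + (convnet α P wstar (-x) - convnet α P w (-x))
          * (d ⬝ᵥ A *ᵥ (-x : EuclideanSpace ℝ (Fin n)))
        = (1 + α) / k * (d ⬝ᵥ A *ᵥ x) ^ 2 := by
    intro x
    have hstar := convnet_sub_convnet_neg α P wstar x
    have h := convnet_sub_convnet_neg α P w x
    simp only [WithLp.ofLp_neg, mulVec_neg, dotProduct_neg, hd, sub_dotProduct] at hstar h ⊢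
    linear_combination ((wstar : Fin r → ℝ) ⬝ᵥ A *ᵥ x - (w : Fin r → ℝ) ⬝ᵥ A *ᵥ x) * (hstar - h)
  rw [integral_eq_half_integral_add_comp_neg hint]
  simp_rw [hsymmetrized, integral_const_mul, dotProduct_mulVec d A, integral_dotProduct_sq hmom,
    sum_sum_mul_mul_transpose, dotProduct_mul_mul_transpose_mulVec]
  ring

/-- For a patch structure, `α ∈ [0,1]`, and a symmetric probability
measure `μ` with finite second moments, covariance `Σ` and `P_Σ = ∑_{i,j} Pᵢ Σ Pⱼᵀ`,
`E[(f_{w*}(x) − f_w(x))·((w*−w)ᵀ(∑ᵢPᵢ)x)] = ((1+α)/(2k))·(w*−w)ᵀ P_Σ (w*−w)`. -/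
theorem stmt4 {n r k : ℕ} (hk : 0 < k) (P : Fin k → Matrix (Fin r) (Fin n) ℝ)
    (hP : IsPatchStruct P) (α : ℝ) (hα : α ∈ Set.Icc (0 : ℝ) 1)
    (μ : Measure (EuclideanSpace ℝ (Fin n))) [IsProbabilityMeasure μ]
    (hsymm : μ.map (fun x => -x) = μ)
    (hmom : Integrable (fun x => ‖x‖ ^ 2) μ)
    (w wstar : EuclideanSpace ℝ (Fin r)) :
    ∫ x, (convnet α P wstar x - convnet α P w x)
        * ((fun j => wstar j - w j) ⬝ᵥ (∑ i, P i).mulVec x) ∂μ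
      = (1 + α) / (2 * k)
          * ((fun j => wstar j - w j) ⬝ᵥ
              (∑ i, ∑ j, P i * covMat μ * (P j)ᵀ).mulVec (fun j => wstar j - w j)) :=
  stmt4_general P α μ hsymm hmom w wstar
end
end

section
/- Let β > 0, γ ≥ 0, B ≥ 0, and η > 0 satisfy η·γ ≤ β and η·β ≤ 1/2. Let (a_t)_{t≥1} be a sequence of nonnegative reals satisfying a_{t+1} ≤ (1 − 3ηβ + η²γ)·a_t + η²B for all t ≥ 1. Then for all t ≥ 1, a_t ≤ max((1 − ηβ)^{t−1}·a_1, ηB/β). -/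
/-- The deterministic recursion underlying the Convotron analysis:
if `η·γ ≤ β`, `η·β ≤ 1/2` and `a_{t+1} ≤ (1 − 3ηβ + η²γ)·a_t + η²B` for all `t ≥ 1`,
then `a_t ≤ max((1 − ηβ)^{t−1}·a_1, ηB/β)` for all `t ≥ 1`. -/
theorem stmt9 (β γ B η : ℝ) (hβ : 0 < β) (hγ : 0 ≤ γ) (hB : 0 ≤ B) (hη : 0 < η)
    (h1 : η * γ ≤ β) (h2 : η * β ≤ 1 / 2)
    (a : ℕ → ℝ) (ha : ∀ t, 1 ≤ t → 0 ≤ a t)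
    (hrec : ∀ t, 1 ≤ t → a (t + 1) ≤ (1 - 3 * η * β + η ^ 2 * γ) * a t + η ^ 2 * B) :
    ∀ t, 1 ≤ t → a t ≤ max ((1 - η * β) ^ (t - 1) * a 1) (η * B / β) := by
  refine Nat.le_induction ?_ ?_
  · simpa using le_max_left (a 1) (η * B / β)
  · intro t ht ih
    have hat : 0 ≤ a t := ha t ht
    have hc : 1 - 3 * η * β + η ^ 2 * γ ≤ 1 - 2 * η * β := by nlinarith
    have h2' : 0 ≤ 1 - 2 * η * β := by linarith
    have step : a (t + 1) ≤ (1 - 2 * η * β) * a t + η ^ 2 * B :=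
      le_trans (hrec t ht) (by nlinarith)
    by_cases hcase : a t ≤ η * B / β
    · have e : (1 - 2 * η * β) * (η * B / β) = η * B / β - 2 * η ^ 2 * B := by
        field_simp
      have key : a (t + 1) ≤ η * B / β := by
        have : (1 - 2 * η * β) * a t ≤ (1 - 2 * η * β) * (η * B / β) :=
          mul_le_mul_of_nonneg_left hcase h2'
        nlinarith
      exact le_trans key (le_max_right _ _)
    · push_neg at hcase
      have hx : η * B ≤ β * a t := by
        rw [div_lt_iff₀ hβ] at hcase
        linarith
      have key : a (t + 1) ≤ (1 - η * β) * a t := by nlinarith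
      have hX : a t ≤ (1 - η * β) ^ (t - 1) * a 1 := by
        rcases max_cases ((1 - η * β) ^ (t - 1) * a 1) (η * B / β) with ⟨h, _⟩ | ⟨h, _⟩
        · rw [h] at ih; exact ih
        · rw [h] at ih; linarith
      have hpos : 0 ≤ 1 - η * β := by linarith
      have : a (t + 1) ≤ (1 - η * β) ^ (t + 1 - 1) * a 1 := by
        have : (t + 1 - 1) = (t - 1) + 1 := by omega
        rw [this, pow_succ]
        calc a (t + 1) ≤ (1 - η * β) * a t := key
          _ ≤ (1 - η * β) * ((1 - η * β) ^ (t - 1) * a 1) :=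
            mul_le_mul_of_nonneg_left hX hpos
          _ = (1 - η * β) ^ (t - 1) * (1 - η * β) * a 1 := by ring
      exact le_trans this (le_max_left _ _)
end

section
/- Let n, r, d be positive integers with 1 ≤ d ≤ r and n ≥ 2r − 1, let k = ⌊(n−r)/d⌋ + 1, and consider the 1D patch-and-stride structure P₁,…,P_k ∈ {0,1}^{r×n} with (Pᵢ)_{a,b} = 1 if and only if b = (i−1)·d + a. Then the r×r matrix P = Σ_{i,j=1}^k PᵢPⱼᵀ satisfies: P_{a,b} = k − m if |a − b| = m·d for some nonnegative integer m, and P_{a,b} = 0 otherwise. -/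
open Matrix Finset
open scoped Kronecker

noncomputable section

/-- The `i`-th selection matrix of the 1D patch-and-stride structure with image size `n`,
patch size `r` and stride `d` (0-based indices): `(Pᵢ)_{a,b} = 1` iff `b = i·d + a`. -/
def patch1D (n r d : ℕ) (i : Fin ((n - r) / d + 1)) : Matrix (Fin r) (Fin n) ℝ :=
  Matrix.of fun a b => if (b : ℕ) = i.1 * d + a.1 then 1 else 0

/-- The 1D patch matrix `P = ∑_{i,j} Pᵢ Pⱼᵀ`. -/
def patchMat1D (n r d : ℕ) : Matrix (Fin r) (Fin r) ℝ :=
  ∑ i, ∑ j, patch1D n r d i * (patch1D n r d j)ᵀ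

/-- The row-major index bijection `{0,…,m−1} × {0,…,n−1} → {0,…,mn−1}`. -/
def rowMajor (m n : ℕ) (x : Fin m × Fin n) : Fin (m * n) :=
  ⟨x.1.1 * n + x.2.1, by
    have h1 : x.1.1 * n + x.2.1 < x.1.1 * n + n := Nat.add_lt_add_left x.2.2 _
    have h2 : x.1.1 * n + n = (x.1.1 + 1) * n := (Nat.succ_mul _ _).symm
    have h3 : (x.1.1 + 1) * n ≤ m * n := Nat.mul_le_mul_right _ x.1.2
    exact lt_of_lt_of_le (h2 ▸ h1) h3⟩

/-- The `(i,j)`-th selection matrix of the 2D patch-and-stride structure with image size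
`n₁ × n₂`, patch size `r₁ × r₂` and strides `d₁, d₂`, acting on row-major vectorized
images (0-based indices): `(Q_{(i,j)})_{a,b} = 1` iff `a = p·r₂ + q` and
`b = (i·d₁ + p)·n₂ + j·d₂ + q` for some `0 ≤ p < r₁`, `0 ≤ q < r₂`. -/
def patch2D (n₁ n₂ r₁ r₂ d₁ d₂ : ℕ)
    (i : Fin ((n₁ - r₁) / d₁ + 1)) (j : Fin ((n₂ - r₂) / d₂ + 1)) :
    Matrix (Fin (r₁ * r₂)) (Fin (n₁ * n₂)) ℝ :=
  Matrix.of fun a b =>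
    if ∃ p : Fin r₁, ∃ q : Fin r₂, (a : ℕ) = p.1 * r₂ + q.1 ∧
        (b : ℕ) = (i.1 * d₁ + p.1) * n₂ + j.1 * d₂ + q.1 then 1 else 0

/-- The 2D patch matrix `Q = ∑_{i,p} ∑_{j,q} Q_{(i,j)} Q_{(p,q)}ᵀ`. -/
def patchMat2D (n₁ n₂ r₁ r₂ d₁ d₂ : ℕ) : Matrix (Fin (r₁ * r₂)) (Fin (r₁ * r₂)) ℝ :=
  ∑ i, ∑ p, ∑ j, ∑ q,
    patch2D n₁ n₂ r₁ r₂ d₁ d₂ i j * (patch2D n₁ n₂ r₁ r₂ d₁ d₂ p q)ᵀ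

lemma count_aux (k m : ℕ) (hm : m < k) :
    ∑ i : Fin k, ∑ j : Fin k, (if (j:ℕ) = (i:ℕ) + m then (1:ℝ) else 0) = (k:ℝ) - m := by
  have step : ∀ i : Fin k, (∑ j : Fin k, (if (j:ℕ) = (i:ℕ) + m then (1:ℝ) else 0))
      = if (i:ℕ) + m < k then 1 else 0 := by
    intro i
    by_cases h : (i:ℕ) + m < k
    · rw [if_pos h]
      have he : ∀ j : Fin k, ((j:ℕ) = (i:ℕ) + m) ↔ j = ⟨(i:ℕ) + m, h⟩ := by
        intro j; constructor
        · intro hh; exact Fin.ext hh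
        · intro hh; rw [hh]
      simp_rw [he]
      simp
    · rw [if_neg h]
      apply Finset.sum_eq_zero
      intro j _
      rw [if_neg]
      have := j.2
      omega
  simp_rw [step]
  rw [Fin.sum_univ_eq_sum_range (fun i => if i + m < k then (1:ℝ) else 0)]
  have he2 : ∀ i ∈ Finset.range k, (if i + m < k then (1:ℝ) else 0)
      = if i ∈ Finset.range (k - m) then (1:ℝ) else 0 := by
    intro i hi
    simp only [Finset.mem_range]
    congr 1
    simp only [eq_iff_iff]
    omega
  rw [Finset.sum_congr rfl he2, Finset.sum_ite_mem]
  have : Finset.range k ∩ Finset.range (k - m) = Finset.range (k - m) := by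
    ext x; simp
  rw [this]
  simp
  rw [Nat.cast_sub (by omega)]

lemma entry_aux (n r d : ℕ) (hrn : r ≤ n)
    (i j : Fin ((n - r) / d + 1)) (a b : Fin r) :
    (patch1D n r d i * (patch1D n r d j)ᵀ) a b
      = if i.1 * d + a.1 = j.1 * d + b.1 then (1:ℝ) else 0 := by
  have hb : i.1 * d + a.1 < n := by
    have h1 : i.1 ≤ (n - r) / d := Nat.lt_succ_iff.mp i.2
    have h2 : i.1 * d ≤ ((n - r) / d) * d := Nat.mul_le_mul_right d h1
    have h3 : ((n - r) / d) * d ≤ n - r := Nat.div_mul_le_self _ _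
    have := a.2
    omega
  rw [Matrix.mul_apply]
  simp only [Matrix.transpose_apply, patch1D, Matrix.of_apply]
  have he : ∀ c : Fin n, ((c:ℕ) = i.1 * d + a.1) ↔ c = ⟨i.1 * d + a.1, hb⟩ := by
    intro c; constructor
    · intro hh; exact Fin.ext hh
    · intro hh; rw [hh]
  simp_rw [he, ite_mul, one_mul, zero_mul, Finset.sum_ite_eq' Finset.univ]
  simp

/-- For the 1D patch-and-stride structure with `1 ≤ d ≤ r`,
`n ≥ 2r − 1` and `k = ⌊(n−r)/d⌋ + 1`, the matrix `P = ∑_{i,j} Pᵢ Pⱼᵀ` satisfies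
`P_{a,b} = k − m` if `|a − b| = m·d` for some `m ∈ ℕ`, and `P_{a,b} = 0` otherwise. -/
theorem stmt12 (n r d : ℕ) (hd : 1 ≤ d) (hdr : d ≤ r) (hrn : r ≤ n) (hn : 2 * r - 1 ≤ n)
    (a b : Fin r) :
    (∀ m : ℕ, ((a.1 : ℤ) - (b.1 : ℤ)).natAbs = m * d →
        patchMat1D n r d a b = (((n - r) / d + 1 : ℕ) : ℝ) - (m : ℝ)) ∧
    ((¬ ∃ m : ℕ, ((a.1 : ℤ) - (b.1 : ℤ)).natAbs = m * d) → patchMat1D n r d a b = 0) := by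
  
  set k := (n - r) / d + 1 with hkdef
  have hsum : patchMat1D n r d a b
      = ∑ i : Fin k, ∑ j : Fin k, (if i.1 * d + a.1 = j.1 * d + b.1 then (1:ℝ) else 0) := by
    simp only [patchMat1D, Matrix.sum_apply]
    exact Finset.sum_congr rfl fun i _ => Finset.sum_congr rfl fun j _ =>
      entry_aux n r d hrn i j a b
  constructor
  · intro m hm
    have ha := a.2
    have hb := b.2
    have hmd : m * d ≤ r - 1 := by omega
    have hmk : m < k := by
      have : m ≤ (n - r) / d := (Nat.le_div_iff_mul_le hd).mpr (by omega)
      omega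
    rw [hsum]
    rcases (by omega : a.1 = b.1 + m * d ∨ b.1 = a.1 + m * d) with h | h
    · -- condition: i*d + a = j*d + b ↔ j = i + m
      have hiff : ∀ i j : Fin k, (i.1 * d + a.1 = j.1 * d + b.1) ↔ (j:ℕ) = (i:ℕ) + m := by
        intro i j
        constructor
        · intro hh
          have : (i.1 + m) * d = j.1 * d := by
            rw [Nat.add_mul]; omega
          have := Nat.eq_of_mul_eq_mul_right (by omega : 0 < d) this
          omega
        · intro hh
          rw [hh, Nat.add_mul]
          omega
      simp_rw [hiff]
      exact count_aux k m hmk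
    · have hiff : ∀ i j : Fin k, (i.1 * d + a.1 = j.1 * d + b.1) ↔ (i:ℕ) = (j:ℕ) + m := by
        intro i j
        constructor
        · intro hh
          have : (j.1 + m) * d = i.1 * d := by
            rw [Nat.add_mul]; omega
          have := Nat.eq_of_mul_eq_mul_right (by omega : 0 < d) this
          omega
        · intro hh
          rw [hh, Nat.add_mul]
          omega
      simp_rw [hiff]
      rw [Finset.sum_comm]
      exact count_aux k m hmk
  · intro hno
    rw [hsum]
    apply Finset.sum_eq_zero; intro i _
    apply Finset.sum_eq_zero; intro j _
    rw [if_neg]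
    intro hh
    apply hno
    refine ⟨((j.1 : ℤ) - (i.1 : ℤ)).natAbs, ?_⟩
    have hz : (a.1 : ℤ) - (b.1 : ℤ) = ((j.1 : ℤ) - (i.1 : ℤ)) * d := by
      have : (i.1 : ℤ) * d + a.1 = (j.1 : ℤ) * d + b.1 := by exact_mod_cast hh
      ring_nf
      ring_nf at this
      omega
    rw [hz, Int.natAbs_mul]
    simp
end
end

section
/- Let n, r, d be positive integers with 1 ≤ d ≤ r and n ≥ 2r − 1, let k = ⌊(n−r)/d⌋ + 1, and consider the 1D patch-and-stride structure P₁,…,P_k ∈ {0,1}^{r×n} with (Pᵢ)_{a,b} = 1 if and only if b = (i−1)·d + a, and P = Σ_{i,j=1}^k PᵢPⱼᵀ. Let p = ⌊(r−1)/d⌋ and p₂ = ⌊p/2⌋. Then the maximum eigenvalue of P satisfies λ_max(P) ≤ k·(p+1) − (p − p₂)·(p₂ + 1). -/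
/-!
The entry `P a b` counts the pairs of patches `(i, j)` with `i·d + a = j·d + b`, so `P` is
entrywise nonnegative and, by Gershgorin's theorem, `λ_max(P)` is at most its largest row sum.
The row sum of row `a` counts the pairs whose offset `t = i - j` lies in the band
`-⌊a/d⌋ ≤ t ≤ ⌊(r-1-a)/d⌋`, of width at most `p + 1`, and the diagonal `t` holds `k - |t|` pairs.
Since every `k - |t|` is positive, the band sum is largest for a band of full width `p + 1`
centred at `0`, which gives `k(p+1) - (p - p₂)(p₂ + 1)`.
-/

open Matrix Finset
open scoped Kronecker

noncomputable section

lemma Matrix.eigenvalue_le_of_forall_sum_abs_le {ι : Type*} [Fintype ι] [DecidableEq ι]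
    (A : Matrix ι ι ℝ) {μ c : ℝ} (hμ : Module.End.HasEigenvalue (toLin' A) μ)
    (h : ∀ a, ∑ b, |A a b| ≤ c) : μ ≤ c := by
  obtain ⟨a, ha⟩ := eigenvalue_mem_ball hμ
  rw [Metric.mem_closedBall, Real.dist_eq] at ha
  calc μ ≤ A a a + ∑ b ∈ univ.erase a, ‖A a b‖ := by linarith [(abs_le.mp ha).2]
    _ ≤ ∑ b, |A a b| := by
      rw [← add_sum_erase _ _ (mem_univ a)]
      exact add_le_add_left (le_abs_self _) _
    _ ≤ c := h a

lemma lamMax_le_of_forall_sum_abs_le {m : ℕ} [NeZero m] (A : Matrix (Fin m) (Fin m) ℝ)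
    (hA : A.IsHermitian) {c : ℝ} (h : ∀ a, ∑ b, |A a b| ≤ c) : lamMax A hA ≤ c :=
  ciSup_le fun i => A.eigenvalue_le_of_forall_sum_abs_le
    (Module.End.hasEigenvalue_iff_mem_spectrum.mpr <| by
      rw [Matrix.spectrum_toLin']; exact hA.eigenvalues_mem_spectrum_real i) h

lemma Fin.sum_ite_val_eq (k c : ℕ) :
    ∑ i : Fin k, (if (i : ℕ) = c then (1 : ℝ) else 0) = if c < k then 1 else 0 := by
  simp [Fin.sum_univ_eq_sum_range (fun i => if i = c then (1 : ℝ) else 0)]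

lemma patchMat1D_apply {n r d : ℕ} (hrn : r ≤ n) (a b : Fin r) :
    patchMat1D n r d a b = ∑ i : Fin ((n - r) / d + 1), ∑ j : Fin ((n - r) / d + 1),
      if (i : ℕ) * d + a = j * d + b then (1 : ℝ) else 0 := by
  simp only [patchMat1D, Matrix.sum_apply, mul_apply, transpose_apply, patch1D, of_apply]
  refine sum_congr rfl fun i _ => sum_congr rfl fun j _ => ?_
  have hi : (i : ℕ) * d + a < n := by
    have := Nat.mul_le_mul_right d (Nat.lt_succ_iff.mp i.2)
    have := Nat.div_mul_le_self (n - r) d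
    omega
  rw [Fin.sum_univ_eq_sum_range (fun c => (if c = (i : ℕ) * d + a then (1 : ℝ) else 0) *
    if c = (j : ℕ) * d + b then 1 else 0)]
  simp only [ite_mul, one_mul, zero_mul, sum_ite_eq', mem_range, if_pos hi]

lemma patchMat1D_nonneg (n r d : ℕ) (a b : Fin r) : 0 ≤ patchMat1D n r d a b := by
  simp only [patchMat1D, Matrix.sum_apply, mul_apply, transpose_apply, patch1D, of_apply]
  positivity

lemma card_filter_mul_add_eq_le {d r : ℕ} (hd : 0 < d) (a : Fin r) (i j : ℕ) :
    #{b : Fin r | i * d + a = j * d + b}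
      ≤ #{t ∈ range ((r - 1 - a) / d + 1) | i = j + t}
        + #{s ∈ range (a / d) | j = i + s + 1} := by
  obtain hempty | ⟨b₀, hb₀⟩ :=
    (univ.filter fun b : Fin r => i * d + a = j * d + b).eq_empty_or_nonempty
  · simp [hempty]
  simp only [mem_filter, mem_univ, true_and] at hb₀
  have hle : #{b : Fin r | i * d + a = j * d + b} ≤ 1 :=
    card_le_one.mpr fun x hx y hy => by simp only [mem_filter, mem_univ, true_and] at hx hy; omega
  refine hle.trans ?_
  rcases le_or_gt j i with hji | hij
  · have hmem : i - j ∈ {t ∈ range ((r - 1 - a) / d + 1) | i = j + t} := by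
      have := Nat.sub_mul i j d
      simp only [mem_filter, mem_range, Nat.lt_succ_iff, Nat.le_div_iff_mul_le hd]
      omega
    have := card_pos.mpr ⟨_, hmem⟩
    omega
  · have hmem : j - i - 1 ∈ {s ∈ range (a / d) | j = i + s + 1} := by
      have := Nat.sub_mul j i d
      have hs : j - i - 1 + 1 = j - i := by omega
      rw [mem_filter, mem_range, Nat.lt_iff_add_one_le, hs, Nat.le_div_iff_mul_le hd]
      omega
    have := card_pos.mpr ⟨_, hmem⟩
    omega

lemma sum_sum_ite_val_eq_add (k t : ℕ) :
    ∑ i : Fin k, ∑ j : Fin k, (if (i : ℕ) = j + t then (1 : ℝ) else 0) = (k - t : ℕ) := by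
  rw [sum_comm]
  simp only [Fin.sum_ite_val_eq]
  rw [Fin.sum_univ_eq_sum_range (fun j => if j + t < k then (1 : ℝ) else 0), sum_boole,
    ← card_range (k - t)]
  congr 2
  ext x
  simp only [mem_filter, mem_range]
  omega

lemma sum_range_natCast_sub {k N : ℕ} (h : N ≤ k) :
    ∑ t ∈ range N, ((k - t : ℕ) : ℝ) = N * k - N * (N - 1) / 2 := by
  induction N with
  | zero => simp
  | succ N ih =>
    rw [sum_range_succ, ih (by omega), Nat.cast_sub (by omega)]
    push_cast
    ring

lemma sum_patchMat1D_row_le_sum_range {n r d : ℕ} (hd : 0 < d) (hrn : r ≤ n) (a : Fin r) :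
    ∑ b, patchMat1D n r d a b
      ≤ ∑ t ∈ range ((r - 1 - a) / d + 1), (((n - r) / d + 1 - t : ℕ) : ℝ)
        + ∑ s ∈ range (a / d), (((n - r) / d + 1 - (s + 1) : ℕ) : ℝ) := by
  set k := (n - r) / d + 1
  have sum_comm₃ : ∀ (N : ℕ) (f : Fin k → Fin k → ℕ → ℝ),
      ∑ i, ∑ j, ∑ t ∈ range N, f i j t = ∑ t ∈ range N, ∑ i, ∑ j, f i j t :=
    fun _ _ => (sum_congr rfl fun _ _ => sum_comm).trans sum_comm
  calc ∑ b, patchMat1D n r d a b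
      = ∑ i : Fin k, ∑ j : Fin k, (#{b : Fin r | (i : ℕ) * d + a = j * d + b} : ℝ) := by
        simp only [patchMat1D_apply hrn, natCast_card_filter]
        rw [sum_comm]
        exact sum_congr rfl fun _ _ => sum_comm
    _ ≤ ∑ i : Fin k, ∑ j : Fin k, ((#{t ∈ range ((r - 1 - a) / d + 1) | (i : ℕ) = j + t} : ℝ)
          + #{s ∈ range (a / d) | (j : ℕ) = i + s + 1}) := by
        gcongr with i _ j _
        exact_mod_cast card_filter_mul_add_eq_le hd a i j
    _ = _ := by
        simp only [natCast_card_filter, sum_add_distrib, sum_comm₃, add_assoc]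
        congr 1
        · exact sum_congr rfl fun t _ => sum_sum_ite_val_eq_add k t
        · exact sum_congr rfl fun s _ => sum_comm.trans (sum_sum_ite_val_eq_add k (s + 1))

lemma sub_mul_sub_sub_one_nonneg (a b : ℕ) : 0 ≤ ((a : ℝ) - b) * (a - b - 1) := by
  rcases le_or_gt a b with h | h
  · have : (a : ℝ) ≤ b := by exact_mod_cast h
    nlinarith
  · have : (b : ℝ) + 1 ≤ a := by exact_mod_cast h
    nlinarith

lemma sum_range_add_sum_range_le {k l m p : ℕ} (hlm : l + m ≤ p) (hpk : p + 1 ≤ k) :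
    ∑ t ∈ range (l + 1), ((k - t : ℕ) : ℝ) + ∑ s ∈ range m, ((k - (s + 1) : ℕ) : ℝ)
      ≤ k * (p + 1) - ((p : ℝ) - (p / 2 : ℕ)) * ((p / 2 : ℕ) + 1) := by
  have hm : ∑ s ∈ range m, ((k - (s + 1) : ℕ) : ℝ)
      = ∑ t ∈ range (m + 1), ((k - t : ℕ) : ℝ) - k := by
    rw [sum_range_succ' _ m]
    simp
  rw [hm, sum_range_natCast_sub (by omega), sum_range_natCast_sub (by omega)]
  push_cast
  set q := p / 2
  have hlm' : (l : ℝ) + m ≤ p := by exact_mod_cast hlm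
  have hpk' : (p : ℝ) + 1 ≤ k := by exact_mod_cast hpk
  -- at fixed `l + m`, the loss `l(l+1)/2 + m(m+1)/2` is least when `l` and `m` are as close
  -- to `p/2` as integers allow
  obtain hp | hp : p = 2 * q ∨ p = 2 * q + 1 := by omega
  · have hp' : (p : ℝ) = 2 * q := by exact_mod_cast hp
    nlinarith [sub_mul_sub_sub_one_nonneg l q, sub_mul_sub_sub_one_nonneg m q]
  · have hp' : (p : ℝ) = 2 * q + 1 := by exact_mod_cast hp
    nlinarith [sub_mul_sub_sub_one_nonneg l q, sub_mul_sub_sub_one_nonneg m q]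

lemma sum_patchMat1D_row_le {n r d : ℕ} (hd : 0 < d) (hn : 2 * r - 1 ≤ n) (a : Fin r) :
    ∑ b, patchMat1D n r d a b
      ≤ (((n - r) / d + 1 : ℕ) : ℝ) * (((r - 1) / d : ℕ) + 1)
        - ((((r - 1) / d : ℕ) : ℝ) - (((r - 1) / d / 2 : ℕ) : ℝ))
            * ((((r - 1) / d / 2 : ℕ) : ℝ) + 1) := by
  have ha := a.2
  refine (sum_patchMat1D_row_le_sum_range hd (by omega) a).trans
    (sum_range_add_sum_range_le ?_ ?_)
  · have := Nat.div_mul_le_self (r - 1 - a) d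
    have := Nat.div_mul_le_self a d
    rw [Nat.le_div_iff_mul_le hd, Nat.add_mul]
    omega
  · have : (r - 1) / d ≤ (n - r) / d := Nat.div_le_div_right (by omega)
    omega

theorem stmt13_general (n r d : ℕ) (hd : 1 ≤ d) (hdr : d ≤ r) (hn : 2 * r - 1 ≤ n)
    (hP : (patchMat1D n r d).IsHermitian) :
    lamMax (patchMat1D n r d) hP
      ≤ (((n - r) / d + 1 : ℕ) : ℝ) * (((r - 1) / d : ℕ) + 1)
        - ((((r - 1) / d : ℕ) : ℝ) - (((r - 1) / d / 2 : ℕ) : ℝ))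
            * ((((r - 1) / d / 2 : ℕ) : ℝ) + 1) := by
  have : NeZero r := ⟨by omega⟩
  refine lamMax_le_of_forall_sum_abs_le _ hP fun a => ?_
  simp_rw [abs_of_nonneg (patchMat1D_nonneg n r d a _)]
  exact sum_patchMat1D_row_le hd hn a

/-- For the 1D patch-and-stride structure with `1 ≤ d ≤ r`,
`n ≥ 2r − 1`, `k = ⌊(n−r)/d⌋ + 1`, `p = ⌊(r−1)/d⌋` and `p₂ = ⌊p/2⌋`, the maximum
eigenvalue of `P = ∑_{i,j} Pᵢ Pⱼᵀ` satisfies `λ_max(P) ≤ k·(p+1) − (p − p₂)·(p₂+1)`. -/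
theorem stmt13 (n r d : ℕ) (hd : 1 ≤ d) (hdr : d ≤ r) (hrn : r ≤ n) (hn : 2 * r - 1 ≤ n)
    (hP : (patchMat1D n r d).IsHermitian) :
    lamMax (patchMat1D n r d) hP
      ≤ (((n - r) / d + 1 : ℕ) : ℝ) * (((r - 1) / d : ℕ) + 1)
        - ((((r - 1) / d : ℕ) : ℝ) - (((r - 1) / d / 2 : ℕ) : ℝ))
            * ((((r - 1) / d / 2 : ℕ) : ℝ) + 1) :=
  stmt13_general n r d hd hdr hn hP
end
end

section
/- Let n, r, d be positive integers with 1 ≤ d ≤ r and n ≥ 2r − 1, let k = ⌊(n−r)/d⌋ + 1, and consider the 1D patch-and-stride structure P₁,…,P_k ∈ {0,1}^{r×n} with (Pᵢ)_{a,b} = 1 if and only if b = (i−1)·d + a, and P = Σ_{i,j=1}^k PᵢPⱼᵀ. Then the minimum eigenvalue of P satisfies λ_min(P) ≥ 1/2. -/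
open Matrix Finset
open scoped Kronecker

noncomputable section

namespace Stmt14Aux


lemma window_eq {d x y : ℕ} (h : x % d = y % d) (h1 : x ≤ y) (h2 : y < x + d) :
    x = y := by
  obtain ⟨c, hc⟩ := (Nat.modEq_iff_dvd' h1).mp h
  match c, hc with
  | 0, hc => omega
  | c + 1, hc =>
    have : d ≤ d * (c + 1) := Nat.le_mul_of_pos_right d (by omega)
    omega

lemma exists_rep {d a r : ℕ} (hd : 0 < d) (ha : a < r) :
    ∃ c, r - d ≤ c ∧ c < r ∧ c % d = a % d := by
  obtain ⟨e, m, hm, hqm, hmod⟩ : ∃ e m, m < d ∧ e + m = r - 1 - a ∧ (a + e) % d = a % d :=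
    ⟨d * ((r-1-a)/d), (r-1-a)%d, Nat.mod_lt _ hd, Nat.div_add_mod _ _,
      Nat.add_mul_mod_self_left a d _⟩
  exact ⟨a + e, by omega, by omega, hmod⟩

variable {n r d : ℕ}

/-- prefix sums along residue class -/
def pp (r d : ℕ) (v : Fin r → ℝ) (b : ℕ) : ℝ :=
  ∑ a : Fin r, if a.1 ≤ b ∧ b % d = a.1 % d then v a else 0

/-- suffix sums along residue class -/
def sf (r d : ℕ) (v : Fin r → ℝ) (b : ℕ) : ℝ :=
  ∑ a : Fin r, if b ≤ a.1 ∧ b % d = a.1 % d then v a else 0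

/-- total sums along residue class -/
def tf (r d : ℕ) (v : Fin r → ℝ) (b : ℕ) : ℝ :=
  ∑ a : Fin r, if b % d = a.1 % d then v a else 0

lemma pp_add_sf (v : Fin r → ℝ) (a : Fin r) :
    pp r d v a.1 + sf r d v a.1 = tf r d v a.1 + v a := by
  unfold pp sf tf
  rw [← Finset.sum_add_distrib]
  have : (v a : ℝ) = ∑ a' : Fin r, if a' = a then v a' else 0 := by
    rw [Finset.sum_ite_eq' Finset.univ a v]; simp
  rw [this, ← Finset.sum_add_distrib]
  apply Finset.sum_congr rfl
  intro a' _
  rcases eq_or_ne a' a with rfl | hne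
  · simp
  · have hv : a'.1 ≠ a.1 := fun h => hne (Fin.ext h)
    split_ifs <;> first | (exfalso; omega) | ring1


lemma hsum (hd : 0 < d) (a a' : Fin r) (x y : ℝ) :
    ∑ c ∈ Finset.Ico (r-d) r,
      (if c % d = a.1 % d then x else 0) * (if c % d = a'.1 % d then y else 0)
    = if a.1 % d = a'.1 % d then x * y else 0 := by
  by_cases hC : a.1 % d = a'.1 % d
  · rw [if_pos hC]
    obtain ⟨c₀, hc1, hc2, hc3⟩ := exists_rep hd a.2
    rw [Finset.sum_eq_single_of_mem c₀ (Finset.mem_Ico.mpr ⟨hc1, hc2⟩)]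
    · rw [if_pos hc3, if_pos (hc3.trans hC)]
    · intro c hc hne
      rcases Finset.mem_Ico.mp hc with ⟨h1, h2⟩
      rw [if_neg]
      · ring
      · intro hcc
        apply hne
        rcases le_or_gt c c₀ with h | h
        · exact window_eq (hcc.trans hc3.symm) h (by omega)
        · exact (window_eq (hc3.trans hcc.symm) h.le (by omega)).symm
  · rw [if_neg hC]
    apply Finset.sum_eq_zero
    intro c _
    by_cases h1 : c % d = a.1 % d
    · rw [if_neg (fun h2 => hC (h1.symm.trans h2))]; ring
    · rw [if_neg h1]; ring

lemma sum_tf_mul (hd : 0 < d) (v : Fin r → ℝ) :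
    ∑ a : Fin r, tf r d v a.1 * v a = ∑ c ∈ Finset.Ico (r-d) r, (tf r d v c)^2 := by
  have lhs : ∑ a : Fin r, tf r d v a.1 * v a
      = ∑ a : Fin r, ∑ a' : Fin r, if a.1 % d = a'.1 % d then v a' * v a else 0 := by
    apply Finset.sum_congr rfl
    intro a _
    rw [tf, Finset.sum_mul]
    exact Finset.sum_congr rfl (fun a' _ => by split_ifs <;> ring)
  rw [lhs]
  have rhs : ∀ c, (tf r d v c)^2
      = ∑ a : Fin r, ∑ a' : Fin r,
          (if c % d = a.1 % d then v a else 0) * (if c % d = a'.1 % d then v a' else 0) := by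
    intro c
    rw [sq, tf, Finset.sum_mul_sum]
  simp only [rhs]
  have swap : ∀ (g : ℕ → Fin r → Fin r → ℝ),
      ∑ c ∈ Finset.Ico (r-d) r, ∑ a : Fin r, ∑ a' : Fin r, g c a a'
      = ∑ a : Fin r, ∑ a' : Fin r, ∑ c ∈ Finset.Ico (r-d) r, g c a a' := by
    intro g
    rw [Finset.sum_comm]
    exact Finset.sum_congr rfl fun a _ => Finset.sum_comm
  rw [swap]
  apply Finset.sum_congr rfl
  intro a _
  apply Finset.sum_congr rfl
  intro a' _
  rw [hsum hd a a' (v a) (v a')]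
  split_ifs <;> ring


lemma colsum_lt (hd : 0 < d) (hn : 2*r - 1 ≤ n) (b a : ℕ) (hb : b < r) (hr : 0 < r) :
    ∑ i : Fin ((n-r)/d + 1), (if b = i.1 * d + a then (1:ℝ) else 0)
      = if a ≤ b ∧ b % d = a % d then 1 else 0 := by
  by_cases hC : a ≤ b ∧ b % d = a % d
  · rw [if_pos hC]
    obtain ⟨hab, hmod⟩ := hC
    obtain ⟨i₀, hi₀⟩ := (Nat.modEq_iff_dvd' hab).mp hmod.symm
    have hb' : b = d * i₀ + a := by omega
    have hi₀k : i₀ < (n-r)/d + 1 := by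
      have h1 : i₀ * d ≤ n - r := by
        have h2 : i₀ * d = d * i₀ := mul_comm _ _
        omega
      have := (Nat.le_div_iff_mul_le hd).mpr h1
      omega
    rw [Finset.sum_eq_single (⟨i₀, hi₀k⟩ : Fin ((n-r)/d + 1))]
    · rw [if_pos (by rw [hb', mul_comm])]
    · intro i _ hne
      rw [if_neg]
      intro hbi
      apply hne
      apply Fin.ext
      show i.1 = i₀
      have h3 : i.1 * d = d * i₀ := by omega
      exact Nat.eq_of_mul_eq_mul_right hd (h3.trans (mul_comm d i₀))
    · intro h; exact absurd (Finset.mem_univ _) h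
  · rw [if_neg hC]
    apply Finset.sum_eq_zero
    intro i _
    rw [if_neg]
    intro hbi
    apply hC
    have hm : (i.1 * d + a) % d = a % d := by
      have h4 : i.1 * d + a = a + d * i.1 := by ring
      rw [h4]; exact Nat.add_mul_mod_self_left a d i.1
    constructor
    · omega
    · rw [hbi]; exact hm

lemma colsum_suf (hd : 0 < d) (hrd : d ≤ r) (hn : 2*r - 1 ≤ n) (a a' : ℕ)
    (ha : a < r) (ha' : a' < r) :
    ∑ i : Fin ((n-r)/d + 1), (if ((n-r)/d) * d + a = i.1 * d + a' then (1:ℝ) else 0)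
      = if a ≤ a' ∧ a % d = a' % d then 1 else 0 := by
  set q := (n-r)/d with hq
  by_cases hC : a ≤ a' ∧ a % d = a' % d
  · rw [if_pos hC]
    obtain ⟨hab, hmod⟩ := hC
    obtain ⟨j, hj⟩ := (Nat.modEq_iff_dvd' hab).mp hmod
    have ha'' : a' = j * d + a := by
      have : d * j = j * d := mul_comm _ _
      omega
    have hjq : j ≤ q := by
      have h1 : j * d ≤ n - r := by omega
      rw [hq]
      exact Nat.le_div_iff_mul_le hd |>.mpr h1
    have hkey : q * d + a = (q - j) * d + a' := by
      have h1 : j * d ≤ q * d := Nat.mul_le_mul_right d hjq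
      have h2 : (q - j) * d = q * d - j * d := Nat.sub_mul q j d
      omega
    rw [Finset.sum_eq_single (⟨q - j, by omega⟩ : Fin (q + 1))]
    · rw [if_pos hkey]
    · intro i _ hne
      rw [if_neg]
      intro hbi
      apply hne
      apply Fin.ext
      show i.1 = q - j
      have h3 : i.1 * d = (q - j) * d := by omega
      exact Nat.eq_of_mul_eq_mul_right hd h3
    · intro h; exact absurd (Finset.mem_univ _) h
  · rw [if_neg hC]
    apply Finset.sum_eq_zero
    intro i _
    rw [if_neg]
    intro hbi
    apply hC
    have hi : i.1 ≤ q := by omega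
    have h1 : i.1 * d ≤ q * d := Nat.mul_le_mul_right d hi
    have e1 : (q * d + a) % d = a % d := by
      have h4 : q * d + a = a + d * q := by ring
      rw [h4]; exact Nat.add_mul_mod_self_left a d q
    have e2 : (i.1 * d + a') % d = a' % d := by
      have h4 : i.1 * d + a' = a' + d * i.1 := by ring
      rw [h4]; exact Nat.add_mul_mod_self_left a' d i.1
    constructor
    · omega
    · rw [hbi] at e1; exact (e2 ▸ e1 : a' % d = a % d).symm |>.symm.symm


lemma pp_eq_tf (v : Fin r → ℝ) (hd : 0 < d) (b : ℕ) (h1 : r - d ≤ b) (h2 : b < r) :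
    pp r d v b = tf r d v b := by
  apply Finset.sum_congr rfl
  intro a _
  by_cases hm : b % d = a.1 % d
  · have hab : a.1 ≤ b := by
      by_contra hgt
      push_neg at hgt
      have ha := a.2
      have := window_eq hm (le_of_lt hgt) (by omega)
      omega
    rw [if_pos ⟨hab, hm⟩, if_pos hm]
  · rw [if_neg (fun h => hm h.2), if_neg hm]

lemma core (n r d : ℕ) (hd : 1 ≤ d) (hdr : d ≤ r) (hrn : r ≤ n) (hn : 2 * r - 1 ≤ n)
    (v : Fin r → ℝ) :
    (∑ a, v a ^ 2) / 2 ≤ v ⬝ᵥ (patchMat1D n r d *ᵥ v) := by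
  have hr : 0 < r := hd.trans hdr
  set S : Matrix (Fin r) (Fin n) ℝ := ∑ i, patch1D n r d i with hS
  have hPS : patchMat1D n r d = S * Sᵀ := by
    rw [patchMat1D, hS, Matrix.transpose_sum, Matrix.sum_mul]
    exact Finset.sum_congr rfl fun i _ => (Matrix.mul_sum _ _ _).symm
  have hquad : v ⬝ᵥ (patchMat1D n r d *ᵥ v) = ∑ b : Fin n, (v ᵥ* S) b ^ 2 := by
    rw [hPS, ← Matrix.mulVec_mulVec, Matrix.dotProduct_mulVec, Matrix.mulVec_transpose]
    simp [dotProduct, sq]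
  -- column values
  have hu_lt : ∀ b : Fin n, b.1 < r → (v ᵥ* S) b = pp r d v b.1 := by
    intro b hb
    rw [pp]
    simp only [hS, Matrix.vecMul, dotProduct, Matrix.sum_apply, patch1D,
      Matrix.of_apply]
    apply Finset.sum_congr rfl
    intro a _
    rw [colsum_lt hd hn b.1 a.1 hb hr]
    split_ifs <;> ring
  have hK1 : (n-r)/d*d ≤ n - r := Nat.div_mul_le_self _ _
  have hK2 : r - d ≤ (n-r)/d*d := by
    have h1 := Nat.div_add_mod (n-r) d
    have h2 : (n-r) % d < d := Nat.mod_lt _ hd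
    have h3 : d * ((n-r)/d) = (n-r)/d * d := mul_comm _ _
    omega
  have hu_suf : ∀ (a : ℕ) (ha : a < r) (hcol : (n-r)/d*d + a < n),
      (v ᵥ* S) ⟨(n-r)/d*d + a, hcol⟩ = sf r d v a := by
    intro a ha hcol
    rw [sf]
    simp only [hS, Matrix.vecMul, dotProduct, Matrix.sum_apply, patch1D,
      Matrix.of_apply]
    apply Finset.sum_congr rfl
    intro a' _
    rw [colsum_suf hd hdr hn a a'.1 ha a'.2]
    split_ifs <;> ring
  set U : ℕ → ℝ := fun b => if h : b < n then (v ᵥ* S) ⟨b, h⟩ else 0 with hU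
  have hsum_univ : ∑ b : Fin n, (v ᵥ* S) b ^ 2 = ∑ b ∈ Finset.range n, U b ^ 2 := by
    rw [← Fin.sum_univ_eq_sum_range (fun b => U b ^ 2) n]
    apply Finset.sum_congr rfl
    intro b _
    simp [hU, b.isLt]
  set K := (n-r)/d*d with hK
  set B : Finset ℕ := Finset.range r ∪ Finset.Ico K (K + r) with hB
  have hBsub : B ⊆ Finset.range n := by
    intro b hb
    simp only [hB, Finset.mem_union, Finset.mem_range, Finset.mem_Ico] at hb ⊢
    omega
  have step1 : ∑ b ∈ B, U b ^ 2 ≤ ∑ b ∈ Finset.range n, U b ^ 2 :=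
    Finset.sum_le_sum_of_subset_of_nonneg hBsub (fun b _ _ => sq_nonneg _)
  have hinter : Finset.range r ∩ Finset.Ico K (K + r) = Finset.Ico K r := by
    ext b
    simp only [Finset.mem_inter, Finset.mem_range, Finset.mem_Ico]
    omega
  have hsplit : ∑ b ∈ B, U b ^ 2 + ∑ b ∈ Finset.Ico K r, U b ^ 2
      = ∑ b ∈ Finset.range r, U b ^ 2 + ∑ b ∈ Finset.Ico K (K + r), U b ^ 2 := by
    rw [hB, ← hinter]
    exact Finset.sum_union_inter
  have eval1 : ∑ b ∈ Finset.range r, U b ^ 2 = ∑ b ∈ Finset.range r, pp r d v b ^ 2 := by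
    apply Finset.sum_congr rfl
    intro b hb
    have hb' : b < r := Finset.mem_range.mp hb
    have hbn : b < n := lt_of_lt_of_le hb' hrn
    rw [hU]
    simp only [dif_pos hbn]
    rw [hu_lt ⟨b, hbn⟩ hb']
  have eval2 : ∑ b ∈ Finset.Ico K (K + r), U b ^ 2 = ∑ a ∈ Finset.range r, sf r d v a ^ 2 := by
    rw [Finset.sum_Ico_eq_sum_range]
    simp only [Nat.add_sub_cancel_left]
    apply Finset.sum_congr rfl
    intro a ha
    have ha' : a < r := Finset.mem_range.mp ha
    have hcol : K + a < n := by omega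
    rw [hU]
    simp only [dif_pos hcol]
    rw [hu_suf a ha' hcol]
  have evalI : ∑ b ∈ Finset.Ico K r, U b ^ 2 = ∑ b ∈ Finset.Ico K r, tf r d v b ^ 2 := by
    apply Finset.sum_congr rfl
    intro b hb
    rcases Finset.mem_Ico.mp hb with ⟨hKb, hbr⟩
    have hbn : b < n := lt_of_lt_of_le hbr hrn
    rw [hU]
    simp only [dif_pos hbn]
    rw [hu_lt ⟨b, hbn⟩ hbr, pp_eq_tf v hd b (by omega) hbr]
  have stepI : ∑ b ∈ Finset.Ico K r, tf r d v b ^ 2 ≤ ∑ c ∈ Finset.Ico (r-d) r, tf r d v c ^ 2 :=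
    Finset.sum_le_sum_of_subset_of_nonneg
      (Finset.Ico_subset_Ico hK2 le_rfl) (fun b _ _ => sq_nonneg _)
  -- pointwise quadratic inequality and summation
  have point : ∀ a : Fin r, v a ^ 2 / 2 ≤
      pp r d v a.1 ^ 2 + sf r d v a.1 ^ 2 - tf r d v a.1 ^ 2 / 2 - tf r d v a.1 * v a := by
    intro a
    have h := pp_add_sf (d := d) v a
    have hx : v a = pp r d v a.1 + sf r d v a.1 - tf r d v a.1 := by linarith
    rw [hx]
    nlinarith [sq_nonneg (pp r d v a.1 - sf r d v a.1)]
  have hsumpt : (∑ a, v a ^ 2) / 2 ≤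
      ∑ a : Fin r, pp r d v a.1 ^ 2 + ∑ a : Fin r, sf r d v a.1 ^ 2
        - (∑ a : Fin r, tf r d v a.1 ^ 2) / 2 - ∑ a : Fin r, tf r d v a.1 * v a := by
    have := Finset.sum_le_sum (fun a (_ : a ∈ Finset.univ) => point a)
    rw [Finset.sum_div]
    calc ∑ a : Fin r, v a ^ 2 / 2 ≤ _ := this
    _ = _ := by
      rw [Finset.sum_sub_distrib, Finset.sum_sub_distrib, Finset.sum_add_distrib,
        ← Finset.sum_div]
  have htf_nonneg : 0 ≤ ∑ a : Fin r, tf r d v a.1 ^ 2 :=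
    Finset.sum_nonneg (fun a _ => sq_nonneg _)
  have hL3 := sum_tf_mul (r := r) hd v
  have hpp_range : ∑ a : Fin r, pp r d v a.1 ^ 2 = ∑ b ∈ Finset.range r, pp r d v b ^ 2 :=
    Fin.sum_univ_eq_sum_range (fun b => pp r d v b ^ 2) r
  have hsf_range : ∑ a : Fin r, sf r d v a.1 ^ 2 = ∑ b ∈ Finset.range r, sf r d v b ^ 2 :=
    Fin.sum_univ_eq_sum_range (fun b => sf r d v b ^ 2) r
  rw [hquad, hsum_univ]
  linarith [step1, hsplit, eval1, eval2, evalI, stepI, hsumpt, htf_nonneg, hL3,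
    hpp_range, hsf_range]

end Stmt14Aux


private lemma stmt14_aux (n r d : ℕ) (hd : 1 ≤ d) (hdr : d ≤ r) (hrn : r ≤ n) (hn : 2 * r - 1 ≤ n)
    (hP : (patchMat1D n r d).IsHermitian) :
    1 / 2 ≤ ⨅ i, hP.eigenvalues i := by
  have hr : 0 < r := hd.trans hdr
  haveI : Nonempty (Fin r) := ⟨⟨0, hr⟩⟩
  apply le_ciInf
  intro i
  set w : EuclideanSpace ℝ (Fin r) := hP.eigenvectorBasis i with hw
  have hnorm : ‖w‖ = 1 := hP.eigenvectorBasis.orthonormal.1 i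
  have hsum : ∑ a, (w a)^2 = 1 := by
    have h1 := EuclideanSpace.norm_eq w
    rw [hnorm] at h1
    have h3 : (∑ a, ‖w a‖^2) = 1 := by
      have hnn : 0 ≤ ∑ a, ‖w a‖^2 := Finset.sum_nonneg fun a _ => sq_nonneg _
      have h4 := Real.sq_sqrt hnn
      rw [← h1] at h4
      simpa using h4.symm
    simpa [Real.norm_eq_abs, sq_abs] using h3
  have heig : patchMat1D n r d *ᵥ ⇑w = hP.eigenvalues i • ⇑w := hP.mulVec_eigenvectorBasis i
  have hdot : (⇑w : Fin r → ℝ) ⬝ᵥ ⇑w = 1 := by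
    rw [dotProduct]
    simpa [pow_two] using hsum
  have hquad : (⇑w : Fin r → ℝ) ⬝ᵥ (patchMat1D n r d *ᵥ ⇑w) = hP.eigenvalues i := by
    rw [heig, dotProduct_smul, hdot, smul_eq_mul, mul_one]
  have hcore := Stmt14Aux.core n r d hd hdr hrn hn ⇑w
  calc (1:ℝ)/2 = (∑ a, w a ^ 2)/2 := by rw [hsum]
  _ ≤ _ := hcore
  _ = hP.eigenvalues i := hquad

/-- For the 1D patch-and-stride structure with `1 ≤ d ≤ r` and
`n ≥ 2r − 1`, the minimum eigenvalue of `P = ∑_{i,j} Pᵢ Pⱼᵀ` satisfies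
`λ_min(P) ≥ 1/2`. -/
theorem stmt14 (n r d : ℕ) (hd : 1 ≤ d) (hdr : d ≤ r) (hrn : r ≤ n) (hn : 2 * r - 1 ≤ n)
    (hP : (patchMat1D n r d).IsHermitian) :
    1 / 2 ≤ lamMin (patchMat1D n r d) hP := by
  unfold lamMin
  exact stmt14_aux n r d hd hdr hrn hn hP
end
end

section
/- Let n₁, n₂, r₁, r₂, d₁, d₂ be positive integers with 1 ≤ d₁ ≤ r₁, 1 ≤ d₂ ≤ r₂, n₁ ≥ 2r₁ − 1, n₂ ≥ 2r₂ − 1, and k₁ = ⌊(n₁−r₁)/d₁⌋ + 1, k₂ = ⌊(n₂−r₂)/d₂⌋ + 1. Let Q_{(i,j)} (1 ≤ i ≤ k₁, 1 ≤ j ≤ k₂) be the 2D patch-and-stride selection matrices, and let P⁽¹⁾ = Σ_{i,p=1}^{k₁} P⁽¹⁾ᵢ(P⁽¹⁾ₚ)ᵀ and P⁽²⁾ = Σ_{j,q=1}^{k₂} P⁽²⁾ⱼ(P⁽²⁾_q)ᵀ be the corresponding 1D patch matrices for parameters (n₁, r₁, d₁) and (n₂, r₂, d₂). Then Q := Σ_{i,p=1}^{k₁}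 Σ_{j,q=1}^{k₂} Q_{(i,j)}·Q_{(p,q)}ᵀ equals the Kronecker product P⁽¹⁾ ⊗ P⁽²⁾ (under the row-major index bijection {1,…,r₁}×{1,…,r₂} ≅ {1,…,r₁r₂}). -/
open Matrix Finset
open scoped Kronecker

noncomputable section

/-!
Each 2D selection matrix is, up to the row-major identification of `Fin m × Fin n` with
`Fin (m * n)`, the Kronecker product `Q_{(i,j)} = P⁽¹⁾ᵢ ⊗ P⁽²⁾ⱼ` of two 1D selection matrices:
a pixel lies in patch `(i, j)` at offset `(p, q)` iff its row lies in the 1D patch `i` at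
offset `p` and its column in the 1D patch `j` at offset `q` (the column offset `j d₂ + q` stays
below `n₂` when `r₂ ≤ n₂`, which makes the row-major splitting of the pixel index unique). The
mixed-product rule `(A ⊗ B)(C ⊗ D)ᵀ = ACᵀ ⊗ BDᵀ` then turns the quadruple sum defining `Q`
into `(∑ Pᵢ Pₚᵀ) ⊗ (∑ Pⱼ P_qᵀ)`.
-/

theorem Nat.add_mul_eq_add_mul_iff {n a b c d : ℕ} (ha : a < n) (hc : c < n) :
    a + n * b = c + n * d ↔ a = c ∧ b = d := by
  refine ⟨fun h => ?_, fun ⟨rfl, rfl⟩ => rfl⟩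
  have hn : 0 < n := lt_of_le_of_lt (Nat.zero_le a) ha
  have hdiv := congrArg (· / n) h
  have hmod := congrArg (· % n) h
  simp only [Nat.add_mul_div_left _ _ hn, Nat.div_eq_of_lt ha, Nat.div_eq_of_lt hc,
    Nat.add_mul_mod_self_left, Nat.mod_eq_of_lt ha, Nat.mod_eq_of_lt hc, Nat.zero_add] at hdiv hmod
  exact ⟨hmod, hdiv⟩

theorem rowMajor_eq_finProdFinEquiv (m n : ℕ) : rowMajor m n = finProdFinEquiv := by
  funext x
  ext
  simp only [rowMajor, finProdFinEquiv_apply_val]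
  ring

theorem sum_kronecker_mul_transpose_kronecker {α ι κ m n m' n' : Type*} [CommSemiring α]
    [Fintype ι] [Fintype κ] [Fintype n] [Fintype n'] (A : ι → Matrix m n α) (B : κ → Matrix m' n' α) :
    ∑ i, ∑ p, ∑ j, ∑ q, (A i ⊗ₖ B j) * (A p ⊗ₖ B q)ᵀ
      = (∑ i, ∑ p, A i * (A p)ᵀ) ⊗ₖ (∑ j, ∑ q, B j * (B q)ᵀ) := by
  simp_rw [← kroneckerMap_transpose, ← mul_kronecker_mul]
  ext ⟨a₁, a₂⟩ ⟨b₁, b₂⟩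
  simp only [Matrix.sum_apply, kronecker_apply, Finset.sum_mul]
  simp only [Finset.mul_sum]

theorem patch_start_add_lt {n r d : ℕ} (hrn : r ≤ n) (i : Fin ((n - r) / d + 1)) (a : Fin r) :
    i.1 * d + a.1 < n := by
  have hi : i.1 * d ≤ (n - r) / d * d := Nat.mul_le_mul_right d (Nat.lt_succ_iff.mp i.2)
  have := Nat.div_mul_le_self (n - r) d
  have := a.2
  omega

theorem patch2D_eq_submatrix_kronecker (n₁ n₂ r₁ r₂ d₁ d₂ : ℕ) (hr₂n : r₂ ≤ n₂)
    (i : Fin ((n₁ - r₁) / d₁ + 1)) (j : Fin ((n₂ - r₂) / d₂ + 1)) :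
    patch2D n₁ n₂ r₁ r₂ d₁ d₂ i j
      = (patch1D n₁ r₁ d₁ i ⊗ₖ patch1D n₂ r₂ d₂ j).submatrix
          finProdFinEquiv.symm finProdFinEquiv.symm := by
  ext a b
  obtain ⟨x, rfl⟩ := finProdFinEquiv.surjective a
  obtain ⟨y, rfl⟩ := finProdFinEquiv.surjective b
  have hcol := patch_start_add_lt hr₂n j x.2
  have hmem : (∃ p : Fin r₁, ∃ q : Fin r₂, x.2.1 + r₂ * x.1.1 = p.1 * r₂ + q.1 ∧
      y.2.1 + n₂ * y.1.1 = (i.1 * d₁ + p.1) * n₂ + j.1 * d₂ + q.1)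
      ↔ y.1.1 = i.1 * d₁ + x.1.1 ∧ y.2.1 = j.1 * d₂ + x.2.1 := by
    constructor
    · rintro ⟨p, q, hx, hy⟩
      rw [Nat.mul_comm p.1, Nat.add_comm _ q.1,
        Nat.add_mul_eq_add_mul_iff x.2.2 q.2] at hx
      obtain ⟨rfl, rfl⟩ : q = x.2 ∧ p = x.1 := ⟨Fin.ext hx.1.symm, Fin.ext hx.2.symm⟩
      have := (Nat.add_mul_eq_add_mul_iff (b := y.1.1) (d := i.1 * d₁ + x.1.1) y.2.2 hcol).mp
        (by rw [hy]; ring)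
      exact ⟨this.2, this.1⟩
    · rintro ⟨hy₁, hy₂⟩
      exact ⟨x.1, x.2, by ring, by rw [hy₁, hy₂]; ring⟩
  simp only [patch2D, patch1D, of_apply, submatrix_apply, Equiv.symm_apply_apply,
    kroneckerMap_apply, finProdFinEquiv_apply_val, if_congr hmem rfl rfl, ite_zero_mul_ite_zero,
    mul_one]

theorem patchMat2D_eq_submatrix_kronecker (n₁ n₂ r₁ r₂ d₁ d₂ : ℕ) (hr₂n : r₂ ≤ n₂) :
    patchMat2D n₁ n₂ r₁ r₂ d₁ d₂
      = (patchMat1D n₁ r₁ d₁ ⊗ₖ patchMat1D n₂ r₂ d₂).submatrix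
          finProdFinEquiv.symm finProdFinEquiv.symm := by
  rw [patchMat1D, patchMat1D, ← sum_kronecker_mul_transpose_kronecker]
  ext a b
  simp only [patchMat2D, patch2D_eq_submatrix_kronecker _ _ _ _ _ _ hr₂n, transpose_submatrix,
    submatrix_mul_equiv, Matrix.sum_apply, submatrix_apply]

theorem stmt16_general (n₁ n₂ r₁ r₂ d₁ d₂ : ℕ) (hr₂n : r₂ ≤ n₂) (a b : Fin r₁ × Fin r₂) :
    patchMat2D n₁ n₂ r₁ r₂ d₁ d₂ (rowMajor r₁ r₂ a) (rowMajor r₁ r₂ b)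
      = (patchMat1D n₁ r₁ d₁ ⊗ₖ patchMat1D n₂ r₂ d₂) a b := by
  rw [patchMat2D_eq_submatrix_kronecker _ _ _ _ _ _ hr₂n, rowMajor_eq_finProdFinEquiv,
    submatrix_apply, Equiv.symm_apply_apply, Equiv.symm_apply_apply]

/-- Under the row-major index bijection, the 2D patch matrix
`Q = ∑_{i,p} ∑_{j,q} Q_{(i,j)} Q_{(p,q)}ᵀ` equals the Kronecker product
`P⁽¹⁾ ⊗ P⁽²⁾` of the corresponding 1D patch matrices. -/
theorem stmt16 (n₁ n₂ r₁ r₂ d₁ d₂ : ℕ)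
    (hd₁ : 1 ≤ d₁) (hd₁r : d₁ ≤ r₁) (hr₁n : r₁ ≤ n₁) (hn₁ : 2 * r₁ - 1 ≤ n₁)
    (hd₂ : 1 ≤ d₂) (hd₂r : d₂ ≤ r₂) (hr₂n : r₂ ≤ n₂) (hn₂ : 2 * r₂ - 1 ≤ n₂)
    (a b : Fin r₁ × Fin r₂) :
    patchMat2D n₁ n₂ r₁ r₂ d₁ d₂ (rowMajor r₁ r₂ a) (rowMajor r₁ r₂ b)
      = (patchMat1D n₁ r₁ d₁ ⊗ₖ patchMat1D n₂ r₂ d₂) a b :=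
  stmt16_general n₁ n₂ r₁ r₂ d₁ d₂ hr₂n a b
end
end
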